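/- arXiv:2309.13284 — 2 statements merged into one kernel-verified Lean document; each statement's English description precedes it below -/
import Mathlib

section
/- Let m, n ≥ 1 be positive integers and R = R_1 × ⋯ × R_m × F_1 × ⋯ × F_n, where each R_i is a commutative Artinian local principal ideal ring that is not a field and each F_j is a field. Let A_0 be the set of non-trivial ideals of R all of whose m + n components are non-zero. Then any two distinct members of A_0 are mutually maximally distant in G(R), no member of A_0 is mutually maximally distant from any non-trivial ideal outside A_0, and the subgraph of the strong resolving graph G(R)_SR induced on the non-trivial ideals having at least one zero component is connected. -/
open SimpleGraph

/-- The type of non-trivial ideals of a commutative ring `R`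
(ideals `I` with `I ≠ 0` and `I ≠ R`). -/
abbrev NontrivialIdeal (R : Type*) [CommRing R] : Type _ :=
  {I : Ideal R // I ≠ ⊥ ∧ I ≠ ⊤}

/-- The intersection graph of ideals of `R`: vertices are the non-trivial ideals,
and distinct vertices are adjacent iff their intersection is non-zero. -/
def intersectionGraph (R : Type*) [CommRing R] : SimpleGraph (NontrivialIdeal R) where
  Adj I J := I ≠ J ∧ I.1 ⊓ J.1 ≠ ⊥
  symm := ⟨fun I J h => ⟨h.1.symm, by rw [inf_comm]; exact h.2⟩⟩
  loopless := ⟨fun I h => h.1 rfl⟩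

/-- Two distinct vertices `u, v` are mutually maximally distant if
`d(v,w) ≤ d(u,v)` for every neighbour `w` of `u` and
`d(u,w) ≤ d(u,v)` for every neighbour `w` of `v`. -/
def MutuallyMaximallyDistant {V : Type*} (G : SimpleGraph V) (u v : V) : Prop :=
  u ≠ v ∧ (∀ w, G.Adj u w → G.edist v w ≤ G.edist u v) ∧
    (∀ w, G.Adj v w → G.edist u w ≤ G.edist u v)

theorem MutuallyMaximallyDistant.symm {V : Type*} {G : SimpleGraph V} {u v : V}
    (h : MutuallyMaximallyDistant G u v) : MutuallyMaximallyDistant G v u :=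
  ⟨h.1.symm,
    fun w hw => by rw [show G.edist v u = G.edist u v from G.edist_comm]; exact h.2.2 w hw,
    fun w hw => by rw [show G.edist v u = G.edist u v from G.edist_comm]; exact h.2.1 w hw⟩

/-- The strong resolving graph of `G`: `u` and `v` are adjacent iff they are
mutually maximally distant. -/
def strongResolvingGraph {V : Type*} (G : SimpleGraph V) : SimpleGraph V where
  Adj := MutuallyMaximallyDistant G
  symm := ⟨fun _ _ h => h.symm⟩
  loopless := ⟨fun _ h => h.1 rfl⟩

/-- A vertex `w` strongly resolves `u` and `v` if `d(w,u) = d(w,v) + d(v,u)` or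
`d(w,v) = d(w,u) + d(u,v)`. A set `W` is a strong resolving set if every two distinct
vertices are strongly resolved by some member of `W`. -/
def IsStrongResolvingSet {V : Type*} (G : SimpleGraph V) (W : Set V) : Prop :=
  ∀ u v : V, u ≠ v → ∃ w ∈ W,
    G.edist w u = G.edist w v + G.edist v u ∨ G.edist w v = G.edist w u + G.edist u v

/-- The product ideal which is `Rᵢ` in the components where `I` is zero and `0` elsewhere. -/
def complIdeal {ι : Type*} (F : ι → Type*) [∀ i, CommRing (F i)] (I : Ideal (∀ i, F i)) :
    Ideal (∀ i, F i) where
  carrier := {x | ∀ i, I.map (Pi.evalRingHom F i) ≠ ⊥ → x i = 0}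
  zero_mem' := fun i _ => rfl
  add_mem' := fun hx hy i hi => by
    simp only [Pi.add_apply, hx i hi, hy i hi, add_zero]
  smul_mem' := fun c x hx i hi => by
    simp only [Pi.smul_apply, smul_eq_mul, Pi.mul_apply, hx i hi, mul_zero]


/-!
Each component ring contains a nonzero element lying in every nonzero ideal: `1` in a field, and
`t ^ (N - 1)` in an Artinian local principal ideal ring with maximal ideal `(t)` and `N` least
with `t ^ N = 0`. Consequently two ideals of the product meet if and only if they share a nonzero
component. An ideal all of whose components are nonzero is therefore adjacent to every other
vertex, and the ideal generated by these elements is such a vertex which is proper as soon as one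
component is not a field; so `G(R)` has diameter at most `2` and any two ideals with zero
intersection are mutually maximally distant. If `J` has a zero component `k`, the k-th factor
`e_k` of `R` is adjacent to every `I ∈ A₀` but not to `J`, so `I` and `J` are not mutually
maximally distant; on the other hand `J` and every `e_l` with `l ≠ k` meet `e_k` trivially, which
makes the factors `e_l` a connected core of the strong resolving graph.
-/

open IsLocalRing

-- Equivalently, `R` has a least nonzero ideal.
def IsSubdirectlyIrreducible (R : Type*) [CommRing R] : Prop :=
  ∃ s : R, s ≠ 0 ∧ ∀ I : Ideal R, I ≠ ⊥ → s ∈ I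

theorem IsField.isSubdirectlyIrreducible {R : Type*} [CommRing R] (hR : IsField R) :
    IsSubdirectlyIrreducible R := by
  have : Nontrivial R := ⟨hR.exists_pair_ne⟩
  refine ⟨1, one_ne_zero, fun I hI => ?_⟩
  obtain ⟨x, hxI, hx0⟩ := (Submodule.ne_bot_iff I).1 hI
  obtain ⟨y, hxy⟩ := hR.mul_inv_cancel hx0
  exact hxy ▸ I.mul_mem_right y hxI

theorem dvd_pow_pred_nilpotencyClass {R : Type*} [CommRing R] [IsLocalRing R] {t : R}
    (ht : maximalIdeal R = Ideal.span {t}) (hnil : IsNilpotent t) {x : R} (hx : x ≠ 0) :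
    x ∣ t ^ (nilpotencyClass t - 1) := by
  have hfin : FiniteMultiplicity t x := ⟨nilpotencyClass t, fun h => hx <| zero_dvd_iff.1 <| by
    rwa [pow_eq_zero_of_le (Nat.le_succ _) (pow_nilpotencyClass hnil)] at h⟩
  obtain ⟨y, hxy, hty⟩ := hfin.exists_eq_pow_mul_and_not_dvd
  set k := multiplicity t x
  have hy : IsUnit y := by
    by_contra hy
    rw [← mem_nonunits_iff, ← mem_maximalIdeal, ht, Ideal.mem_span_singleton] at hy
    exact hty hy
  have hk : k < nilpotencyClass t := by
    by_contra! hk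
    exact hx (by rw [hxy, pow_eq_zero_of_le hk (pow_nilpotencyClass hnil), zero_mul])
  refine ⟨↑hy.unit⁻¹ * t ^ (nilpotencyClass t - 1 - k), ?_⟩
  calc t ^ (nilpotencyClass t - 1) = t ^ k * t ^ (nilpotencyClass t - 1 - k) := by
        rw [← pow_add]; congr 1; omega
    _ = t ^ k * y * (↑hy.unit⁻¹ * t ^ (nilpotencyClass t - 1 - k)) := by
        rw [mul_assoc, ← mul_assoc y, IsUnit.mul_val_inv, one_mul]
    _ = _ := by rw [hxy]

theorem IsArtinianRing.isSubdirectlyIrreducible (R : Type*) [CommRing R] [IsArtinianRing R]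
    [IsLocalRing R] [IsPrincipalIdealRing R] : IsSubdirectlyIrreducible R := by
  obtain ⟨t, ht⟩ := Submodule.IsPrincipal.principal (maximalIdeal R)
  have hnil : IsNilpotent t := Ring.KrullDimLE.isNilpotent_iff_mem_nonunits.mpr <| by
    rw [← mem_maximalIdeal, ht]; exact Submodule.mem_span_singleton_self t
  refine ⟨_, pow_pred_nilpotencyClass hnil, fun I hI => ?_⟩
  obtain ⟨x, hxI, hx0⟩ := (Submodule.ne_bot_iff I).1 hI
  obtain ⟨c, hc⟩ := dvd_pow_pred_nilpotencyClass ht hnil hx0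
  exact hc ▸ I.mul_mem_right c hxI

theorem IsSubdirectlyIrreducible.nontrivial {R : Type*} [CommRing R]
    (hR : IsSubdirectlyIrreducible R) : Nontrivial R :=
  let ⟨s, hs0, _⟩ := hR; nontrivial_of_ne s 0 hs0

theorem not_isUnit_of_forall_mem {R : Type*} [CommRing R] [Nontrivial R] {s : R}
    (hs : ∀ I : Ideal R, I ≠ ⊥ → s ∈ I) (hR : ¬ IsField R) : ¬ IsUnit s := fun hu => by
  obtain ⟨I, hbot, htop⟩ := Ring.not_isField_iff_exists_ideal_bot_lt_and_lt_top.1 hR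
  exact htop.ne (Ideal.eq_top_of_isUnit_mem I (hs I hbot.ne') hu)

section Graph

variable {V : Type*} {G : SimpleGraph V} {u v w : V}

theorem SimpleGraph.two_le_edist_of_not_adj (hne : u ≠ v) (h : ¬ G.Adj u v) :
    2 ≤ G.edist u v := by
  have : 1 < G.edist u v := not_le.1 fun h1 => (G.edist_le_one_iff_adj_or_eq.1 h1).elim h hne
  exact Order.add_one_le_of_lt this

theorem SimpleGraph.edist_le_two_of_forall_adj {P : V} (hP : ∀ w, w ≠ P → G.Adj P w) (u v : V) :
    G.edist u v ≤ 2 := by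
  have hle : ∀ w, G.edist P w ≤ 1 := fun w => G.edist_le_one_iff_adj_or_eq.2 <|
    (eq_or_ne w P).elim (fun h => Or.inr h.symm) (fun h => Or.inl (hP w h))
  calc G.edist u v ≤ G.edist u P + G.edist P v := G.edist_triangle
    _ ≤ 1 + 1 := add_le_add (G.edist_comm ▸ hle u) (hle v)
    _ = 2 := one_add_one_eq_two

theorem MutuallyMaximallyDistant.of_forall_adj (hne : u ≠ v) (hu : ∀ w, w ≠ u → G.Adj u w)
    (hv : ∀ w, w ≠ v → G.Adj v w) : MutuallyMaximallyDistant G u v := by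
  have hle : ∀ x, (∀ w, w ≠ x → G.Adj x w) → ∀ w, G.edist x w ≤ G.edist u v := fun x hx w => by
    rw [G.edist_eq_one_iff_adj.2 (hu v hne.symm), G.edist_le_one_iff_adj_or_eq]
    exact (eq_or_ne w x).elim (fun h => Or.inr h.symm) (fun h => Or.inl (hx w h))
  exact ⟨hne, fun w _ => hle v hv w, fun w _ => hle u hu w⟩

theorem MutuallyMaximallyDistant.of_not_adj (hdiam : ∀ x y, G.edist x y ≤ 2) (hne : u ≠ v)
    (h : ¬ G.Adj u v) : MutuallyMaximallyDistant G u v :=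
  have h2 := SimpleGraph.two_le_edist_of_not_adj hne h
  ⟨hne, fun w _ => (hdiam v w).trans h2, fun w _ => (hdiam u w).trans h2⟩

theorem not_mutuallyMaximallyDistant_of_adj (huv : G.Adj u v) (huw : G.Adj u w) (hvw : v ≠ w)
    (h : ¬ G.Adj v w) : ¬ MutuallyMaximallyDistant G u v := fun hmmd => by
  have := (SimpleGraph.two_le_edist_of_not_adj hvw h).trans (hmmd.2.1 w huw)
  rw [G.edist_eq_one_iff_adj.2 huv] at this
  exact absurd this (by decide)

theorem SimpleGraph.connected_of_forall_adj_clique {ι : Type*} [Nonempty ι] (f : ι → V)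
    (hf : ∀ k l, k ≠ l → G.Adj (f k) (f l)) (hv : ∀ v, ∃ k, G.Adj v (f k)) : G.Connected := by
  have : Nonempty V := ⟨f (Classical.arbitrary ι)⟩
  have hfr : ∀ k l, G.Reachable (f k) (f l) := fun k l =>
    (eq_or_ne k l).elim (fun h => h ▸ Reachable.refl _) (fun h => (hf k l h).reachable)
  refine ⟨fun u v => ?_⟩
  obtain ⟨k, hk⟩ := hv u
  obtain ⟨l, hl⟩ := hv v
  exact hk.reachable.trans ((hfr k l).trans hl.reachable.symm)

end Graph

section PiIdeal

variable {ι : Type*} {A : ι → Type*} [∀ i, CommRing (A i)]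

theorem Ideal.map_evalRingHom_eq_bot_iff {I : Ideal (∀ i, A i)} {k : ι} :
    I.map (Pi.evalRingHom A k) = ⊥ ↔ ∀ x ∈ I, x k = 0 := by
  rw [Ideal.map_eq_bot_iff_le_ker]
  rfl

theorem Ideal.exists_map_evalRingHom_ne_bot {I : Ideal (∀ i, A i)} (hI : I ≠ ⊥) :
    ∃ k, I.map (Pi.evalRingHom A k) ≠ ⊥ := by
  contrapose! hI
  exact eq_bot_iff.2 fun x hx =>
    (Submodule.mem_bot _).2 <| funext fun k => map_evalRingHom_eq_bot_iff.1 (hI k) x hx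

theorem Ideal.map_evalRingHom_span_singleton (x : ∀ i, A i) (k : ι) :
    (Ideal.span {x}).map (Pi.evalRingHom A k) = Ideal.span {x k} := by
  rw [Ideal.map_span, Set.image_singleton]
  rfl

theorem Ideal.inf_eq_bot_of_forall_map_evalRingHom {I J : Ideal (∀ i, A i)}
    (h : ∀ k, I.map (Pi.evalRingHom A k) = ⊥ ∨ J.map (Pi.evalRingHom A k) = ⊥) : I ⊓ J = ⊥ :=
  eq_bot_iff.2 fun x ⟨hxI, hxJ⟩ => (Submodule.mem_bot _).2 <| funext fun k =>
    (h k).elim (fun hI => map_evalRingHom_eq_bot_iff.1 hI x hxI)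
      (fun hJ => map_evalRingHom_eq_bot_iff.1 hJ x hxJ)

theorem Ideal.inf_eq_bot_of_map_evalRingHom_eq_bot {I J : Ideal (∀ i, A i)} {k : ι}
    (hI : I.map (Pi.evalRingHom A k) = ⊥) (hJ : ∀ i, i ≠ k → J.map (Pi.evalRingHom A i) = ⊥) :
    I ⊓ J = ⊥ :=
  inf_eq_bot_of_forall_map_evalRingHom fun i =>
    (eq_or_ne i k).elim (fun h => Or.inl (h ▸ hI)) (fun h => Or.inr (hJ i h))

theorem Ideal.single_mem_of_mem_map_evalRingHom [DecidableEq ι] {I : Ideal (∀ i, A i)} {k : ι}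
    {y : A k} (hy : y ∈ I.map (Pi.evalRingHom A k)) : Pi.single k y ∈ I := by
  obtain ⟨x, hx, rfl⟩ := (Ideal.mem_map_iff_of_surjective _ (Function.surjective_eval k)).1 hy
  simpa [← Pi.single_mul_left] using I.mul_mem_left (Pi.single k 1) hx

theorem exists_nontrivialIdeal_map_evalRingHom_eq_bot_iff [Nontrivial ι] [∀ i, Nontrivial (A i)]
    (k : ι) :
    ∃ e : NontrivialIdeal (∀ i, A i), ∀ i, e.1.map (Pi.evalRingHom A i) = ⊥ ↔ i ≠ k := by
  classical
  obtain ⟨k', hk'⟩ := exists_ne k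
  refine ⟨⟨Ideal.span {Pi.single k 1}, ?_, ?_⟩, fun i => ?_⟩
  · simp
  · rw [ne_eq, Ideal.span_singleton_eq_top, Pi.isUnit_iff, not_forall]
    exact ⟨k', by simp [hk']⟩
  · by_cases h : i = k
    · subst h; simp [Ideal.map_evalRingHom_span_singleton]
    · simp [Ideal.map_evalRingHom_span_singleton, h]

end PiIdeal

section IntersectionGraph

variable {ι : Type*} {A : ι → Type*} [∀ i, CommRing (A i)]
  (hA : ∀ k, IsSubdirectlyIrreducible (A k))
include hA

theorem inf_ne_bot_iff_exists_map_evalRingHom_ne_bot {I J : Ideal (∀ i, A i)} :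
    I ⊓ J ≠ ⊥ ↔ ∃ k, I.map (Pi.evalRingHom A k) ≠ ⊥ ∧ J.map (Pi.evalRingHom A k) ≠ ⊥ := by
  classical
  refine ⟨fun h => ?_, fun ⟨k, hI, hJ⟩ hbot => ?_⟩
  · contrapose! h
    exact Ideal.inf_eq_bot_of_forall_map_evalRingHom fun k => or_iff_not_imp_left.2 (h k)
  · obtain ⟨s, hs0, hs⟩ := hA k
    have hmem : Pi.single k s ∈ I ⊓ J :=
      ⟨Ideal.single_mem_of_mem_map_evalRingHom (hs _ hI),
        Ideal.single_mem_of_mem_map_evalRingHom (hs _ hJ)⟩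
    rw [hbot, Submodule.mem_bot, Pi.single_eq_zero_iff] at hmem
    exact hs0 hmem

theorem intersectionGraph_adj_of_forall_map_ne_bot {I J : NontrivialIdeal (∀ i, A i)}
    (hI : ∀ k, I.1.map (Pi.evalRingHom A k) ≠ ⊥) (hne : I ≠ J) :
    (intersectionGraph (∀ i, A i)).Adj I J := by
  obtain ⟨k, hk⟩ := Ideal.exists_map_evalRingHom_ne_bot J.2.1
  exact ⟨hne, (inf_ne_bot_iff_exists_map_evalRingHom_ne_bot hA).2 ⟨k, hI k, hk⟩⟩

theorem intersectionGraph_mutuallyMaximallyDistant_of_forall_map_ne_bot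
    {I J : NontrivialIdeal (∀ i, A i)} (hI : ∀ k, I.1.map (Pi.evalRingHom A k) ≠ ⊥)
    (hJ : ∀ k, J.1.map (Pi.evalRingHom A k) ≠ ⊥) (hne : I ≠ J) :
    MutuallyMaximallyDistant (intersectionGraph (∀ i, A i)) I J :=
  .of_forall_adj hne (fun _ h => intersectionGraph_adj_of_forall_map_ne_bot hA hI h.symm)
    (fun _ h => intersectionGraph_adj_of_forall_map_ne_bot hA hJ h.symm)

theorem intersectionGraph_not_mutuallyMaximallyDistant_of_exists_map_eq_bot [Nontrivial ι]
    {I J : NontrivialIdeal (∀ i, A i)} (hI : ∀ k, I.1.map (Pi.evalRingHom A k) ≠ ⊥)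
    (hJ : ∃ k, J.1.map (Pi.evalRingHom A k) = ⊥) :
    ¬ MutuallyMaximallyDistant (intersectionGraph (∀ i, A i)) I J := fun hmmd => by
  have := fun i => (hA i).nontrivial
  obtain ⟨k, hk⟩ := hJ
  obtain ⟨W, hW⟩ := exists_nontrivialIdeal_map_evalRingHom_eq_bot_iff (A := A) k
  obtain ⟨k', hk'⟩ := exists_ne k
  have hIW : I ≠ W := fun h => hI k' (h ▸ (hW k').2 hk')
  have hJW : J ≠ W := fun h => (hW k).1 (h ▸ hk) rfl
  refine not_mutuallyMaximallyDistant_of_adj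
    (intersectionGraph_adj_of_forall_map_ne_bot hA hI hmmd.1)
    (intersectionGraph_adj_of_forall_map_ne_bot hA hI hIW) hJW
    (fun h => h.2 (Ideal.inf_eq_bot_of_map_evalRingHom_eq_bot hk fun i => (hW i).2)) hmmd

variable (hnf : ∃ k, ¬ IsField (A k))
include hnf

theorem exists_nontrivialIdeal_forall_map_evalRingHom_ne_bot :
    ∃ P : NontrivialIdeal (∀ i, A i), ∀ k, P.1.map (Pi.evalRingHom A k) ≠ ⊥ := by
  choose s hs0 hs using hA
  obtain ⟨k, hk⟩ := hnf
  have : Nontrivial (A k) := nontrivial_of_ne _ _ (hs0 k)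
  refine ⟨⟨Ideal.span {s}, ?_, ?_⟩, fun i => ?_⟩
  · exact fun h => hs0 k (congrFun (Ideal.span_singleton_eq_bot.1 h) k)
  · rw [ne_eq, Ideal.span_singleton_eq_top, Pi.isUnit_iff]
    exact fun h => not_isUnit_of_forall_mem (hs k) hk (h k)
  · rw [Ideal.map_evalRingHom_span_singleton, ne_eq, Ideal.span_singleton_eq_bot]
    exact hs0 i

theorem intersectionGraph_edist_le_two (I J : NontrivialIdeal (∀ i, A i)) :
    (intersectionGraph (∀ i, A i)).edist I J ≤ 2 :=
  have ⟨_, hP⟩ := exists_nontrivialIdeal_forall_map_evalRingHom_ne_bot hA hnf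
  SimpleGraph.edist_le_two_of_forall_adj
    (fun _ h => intersectionGraph_adj_of_forall_map_ne_bot hA hP h.symm) I J

theorem intersectionGraph_mutuallyMaximallyDistant_of_map_eq_bot
    {I J : NontrivialIdeal (∀ i, A i)} {k : ι} (hI : I.1.map (Pi.evalRingHom A k) = ⊥)
    (hJ : ∀ i, J.1.map (Pi.evalRingHom A i) = ⊥ ↔ i ≠ k) :
    MutuallyMaximallyDistant (intersectionGraph (∀ i, A i)) I J := by
  refine .of_not_adj (intersectionGraph_edist_le_two hA hnf) (fun h => ?_) fun h => h.2 ?_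
  · exact (hJ k).1 (h ▸ hI) rfl
  · exact Ideal.inf_eq_bot_of_map_evalRingHom_eq_bot hI fun i => (hJ i).2

theorem strongResolvingGraph_intersectionGraph_induce_connected [Nontrivial ι] :
    ((strongResolvingGraph (intersectionGraph (∀ i, A i))).induce
      {I : NontrivialIdeal (∀ i, A i) | ∃ k, I.1.map (Pi.evalRingHom A k) = ⊥}).Connected := by
  have := fun i => (hA i).nontrivial
  choose e he using exists_nontrivialIdeal_map_evalRingHom_eq_bot_iff (A := A)
  have hmmd {I : NontrivialIdeal (∀ i, A i)} {k : ι} (hI : I.1.map (Pi.evalRingHom A k) = ⊥) :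
      MutuallyMaximallyDistant (intersectionGraph (∀ i, A i)) I (e k) :=
    intersectionGraph_mutuallyMaximallyDistant_of_map_eq_bot hA hnf hI (he k)
  refine SimpleGraph.connected_of_forall_adj_clique
    (fun k => ⟨e k, (exists_ne k).imp fun i hi => (he k i).2 hi⟩)
    (fun k l hkl => hmmd ((he k l).2 hkl.symm)) ?_
  rintro ⟨I, k, hk⟩
  exact ⟨k, hmmd hk⟩

end IntersectionGraph

theorem statement16 (m n : ℕ) (hm : 1 ≤ m) (hn : 1 ≤ n)
    (A : Fin m ⊕ Fin n → Type*) [∀ k, CommRing (A k)]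
    (hart : ∀ i : Fin m, IsArtinianRing (A (Sum.inl i)))
    (hloc : ∀ i : Fin m, IsLocalRing (A (Sum.inl i)))
    (hpir : ∀ i : Fin m, IsPrincipalIdealRing (A (Sum.inl i)))
    (hnf : ∀ i : Fin m, ¬ IsField (A (Sum.inl i)))
    (hfield : ∀ j : Fin n, IsField (A (Sum.inr j)))
    (A0 : Set (NontrivialIdeal (∀ k, A k)))
    (hA0 : A0 = {I | ∀ k, I.1.map (Pi.evalRingHom A k) ≠ ⊥}) :
    (∀ I ∈ A0, ∀ J ∈ A0, I ≠ J →
        MutuallyMaximallyDistant (intersectionGraph (∀ k, A k)) I J) ∧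
      (∀ I ∈ A0, ∀ J ∉ A0,
        ¬ MutuallyMaximallyDistant (intersectionGraph (∀ k, A k)) I J) ∧
      ((strongResolvingGraph (intersectionGraph (∀ k, A k))).induce
        {I : NontrivialIdeal (∀ k, A k) | ∃ k, I.1.map (Pi.evalRingHom A k) = ⊥}).Connected := by
  have hA : ∀ k, IsSubdirectlyIrreducible (A k) := by
    rintro (i | j)
    · have := hart i; have := hloc i; have := hpir i
      exact IsArtinianRing.isSubdirectlyIrreducible _
    · exact (hfield j).isSubdirectlyIrreducible
  have : Nontrivial (Fin m ⊕ Fin n) := ⟨⟨.inl ⟨0, hm⟩, .inr ⟨0, hn⟩, Sum.inl_ne_inr⟩⟩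
  subst hA0
  refine ⟨fun I hI J hJ hne => ?_, fun I hI J hJ => ?_, ?_⟩
  · exact intersectionGraph_mutuallyMaximallyDistant_of_forall_map_ne_bot hA hI hJ hne
  · simp only [Set.mem_ofPred_eq, not_forall, not_not] at hJ
    exact intersectionGraph_not_mutuallyMaximallyDistant_of_exists_map_eq_bot hA hI hJ
  · exact strongResolvingGraph_intersectionGraph_induce_connected hA ⟨.inl ⟨0, hm⟩, hnf _⟩
end

section
/- Let m, n ≥ 1 be positive integers and R = R_1 × ⋯ × R_m × F_1 × ⋯ × F_n, where each R_i is a commutative Artinian local principal ideal ring that is not a field and each F_j is a field. Then the maximum cardinality of a set S of non-trivial ideals of R such that no two distinct members of S are mutually maximally distant in G(R) equals 2^{m+n-1}; that is, the independence number of the strong resolving graph satisfies β(G(R)_SR) = 2^{m+n-1}. -/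
open SimpleGraph

/-!
Write `R = ∏ₖ Aₖ` and call `{k | some element of I has nonzero k-th coordinate}` the support of
an ideal `I`. The ideals of each factor are totally ordered (in an Artinian local principal
ideal ring every element is a unit times a power of a generator of the maximal ideal), so two
ideals of `R` meet exactly when their supports meet. A non-field factor lets every nonempty
support be realised by a proper ideal, whence all distances in `G(R)` are at most `2`, and two
distinct vertices are mutually maximally distant iff their supports are equal or disjoint. A set
without such pairs is thus an intersecting family of subsets of the `m + n` indices, of size at
most `2 ^ (m + n - 1)`; the supports containing one fixed index attain this bound.
-/

section PreValuationRing

open IsLocalRing Ideal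

variable {R : Type*} [CommRing R] [IsLocalRing R]

theorem exists_isUnit_mul_pow_of_maximalIdeal_eq_span {t : R}
    (ht : maximalIdeal R = span {t}) (hnil : IsNilpotent t) (a : R) :
    ∃ u : R, ∃ i : ℕ, IsUnit u ∧ a = u * t ^ i := by
  obtain ⟨N, hN⟩ := hnil
  -- Peel factors `t` off `a` until the cofactor is a unit; after `N` steps `a = 0 = 1 * t ^ N`.
  suffices h : ∀ d k, N ≤ k + d → t ^ k ∣ a → ∃ u : R, ∃ i : ℕ, IsUnit u ∧ a = u * t ^ i from
    h N 0 (by lia) (by simp)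
  intro d
  induction d with
  | zero =>
    intro k hk ⟨b, hb⟩
    refine ⟨1, k, isUnit_one, ?_⟩
    rw [hb, pow_eq_zero_of_le (by lia) hN, zero_mul, one_mul]
  | succ d ih =>
    intro k hk ⟨b, hb⟩
    by_cases hb' : IsUnit b
    · exact ⟨b, k, hb', by rw [hb, mul_comm]⟩
    · have htb : t ∣ b := mem_span_singleton.mp (ht ▸ (mem_maximalIdeal b).mpr hb')
      exact ih (k + 1) (by lia) (hb ▸ pow_succ t k ▸ mul_dvd_mul_left _ htb)

theorem PreValuationRing.of_maximalIdeal_eq_span {t : R}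
    (ht : maximalIdeal R = span {t}) (hnil : IsNilpotent t) : PreValuationRing R := by
  refine PreValuationRing.iff_dvd_total.mpr ⟨fun a b => ?_⟩
  obtain ⟨u, i, hu, rfl⟩ := exists_isUnit_mul_pow_of_maximalIdeal_eq_span ht hnil a
  obtain ⟨v, j, hv, rfl⟩ := exists_isUnit_mul_pow_of_maximalIdeal_eq_span ht hnil b
  simp only [hu.mul_left_dvd, hv.mul_left_dvd, hu.dvd_mul_left, hv.dvd_mul_left]
  exact (le_total i j).imp (pow_dvd_pow t) (pow_dvd_pow t)

instance PreValuationRing.of_isArtinianRing_of_isPrincipalIdealRing [IsArtinianRing R]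
    [IsPrincipalIdealRing R] : PreValuationRing R := by
  obtain ⟨t, ht⟩ := (IsPrincipalIdealRing.principal (maximalIdeal R)).principal
  refine PreValuationRing.of_maximalIdeal_eq_span ht ?_
  exact Ring.KrullDimLE.isNilpotent_iff_mem_maximalIdeal.mpr (ht ▸ mem_span_singleton_self t)

end PreValuationRing

open Finset

namespace Ideal

variable {ι : Type*} {A : ι → Type*} [∀ k, CommRing (A k)] {I J : Ideal (∀ k, A k)} {k : ι}

theorem inf_ne_bot_of_dvd_apply {x y : ∀ k, A k} (hx : x ∈ I) (hy : y ∈ J) (hyk : y k ≠ 0)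
    (hdvd : x k ∣ y k) : I ⊓ J ≠ ⊥ := by
  classical
  obtain ⟨c, hc⟩ := hdvd
  have hI : Pi.single k (y k) ∈ I := by
    rw [hc, mul_comm, Pi.single_mul_left]
    exact I.mul_mem_left _ hx
  have hJ : Pi.single k (y k) ∈ J := by
    rw [← one_mul (y k), Pi.single_mul_left]
    exact J.mul_mem_left _ hy
  exact (Submodule.ne_bot_iff _).mpr ⟨_, ⟨hI, hJ⟩, Pi.single_eq_zero_iff.not.mpr hyk⟩

variable [Fintype ι]

noncomputable def piSupport (I : Ideal (∀ k, A k)) : Finset ι := by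
  classical exact {k | ∃ x ∈ I, x k ≠ 0}

theorem mem_piSupport : k ∈ I.piSupport ↔ ∃ x ∈ I, x k ≠ 0 := by
  simp [piSupport]

theorem piSupport_nonempty (hI : I ≠ ⊥) : I.piSupport.Nonempty := by
  obtain ⟨x, hxI, hx⟩ := Submodule.exists_mem_ne_zero_of_ne_bot hI
  obtain ⟨k, hk⟩ := Function.ne_iff.mp hx
  exact ⟨k, mem_piSupport.mpr ⟨x, hxI, hk⟩⟩

theorem mem_piSupport_span_singleton {x : ∀ k, A k} :
    k ∈ (span {x}).piSupport ↔ x k ≠ 0 := by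
  refine ⟨fun h => ?_, fun hx => mem_piSupport.mpr ⟨x, mem_span_singleton_self x, hx⟩⟩
  obtain ⟨y, hy, hyk⟩ := mem_piSupport.mp h
  obtain ⟨r, rfl⟩ := mem_span_singleton'.mp hy
  exact right_ne_zero_of_mul hyk

theorem inf_ne_bot_iff_not_disjoint_piSupport [∀ k, PreValuationRing (A k)] :
    I ⊓ J ≠ ⊥ ↔ ¬Disjoint I.piSupport J.piSupport := by
  rw [not_disjoint_iff]
  constructor
  · intro h
    obtain ⟨x, ⟨hxI, hxJ⟩, hx⟩ := Submodule.exists_mem_ne_zero_of_ne_bot h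
    obtain ⟨k, hk⟩ := Function.ne_iff.mp hx
    exact ⟨k, mem_piSupport.mpr ⟨x, hxI, hk⟩, mem_piSupport.mpr ⟨x, hxJ, hk⟩⟩
  · rintro ⟨k, hkI, hkJ⟩
    obtain ⟨x, hxI, hxk⟩ := mem_piSupport.mp hkI
    obtain ⟨y, hyJ, hyk⟩ := mem_piSupport.mp hkJ
    obtain hdvd | hdvd := ValuationRing.dvd_total (x k) (y k)
    · exact inf_ne_bot_of_dvd_apply hxI hyJ hyk hdvd
    · exact inf_comm I J ▸ inf_ne_bot_of_dvd_apply hyJ hxI hxk hdvd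

end Ideal

theorem MutuallyMaximallyDistant.of_forall_edist_le {V : Type*} {G : SimpleGraph V} {u v : V}
    (huv : u ≠ v) (h : ∀ x y, G.edist x y ≤ G.edist u v) : MutuallyMaximallyDistant G u v :=
  ⟨huv, fun w _ => h v w, fun w _ => h u w⟩

theorem exists_ne_zero_not_isUnit_of_not_isField {R : Type*} [CommRing R] [Nontrivial R]
    (h : ¬IsField R) : ∃ a : R, a ≠ 0 ∧ ¬IsUnit a := by
  by_contra! hunit
  exact h ⟨exists_pair_ne R, mul_comm, fun ha => (hunit _ ha).exists_right_inv⟩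

section ProductRing

variable {ι : Type*} [Fintype ι] {A : ι → Type*} [∀ k, CommRing (A k)]

-- Such an `e` exists iff every factor is nontrivial and some factor is not a field.
variable {e : ∀ k, A k}

theorem NontrivialIdeal.exists_piSupport_eq (he : ∀ k, e k ≠ 0) (he' : ¬IsUnit e)
    {T : Finset ι} (hT : T.Nonempty) : ∃ I : NontrivialIdeal (∀ k, A k), I.1.piSupport = T := by
  classical
  set x : ∀ k, A k := T.piecewise e 0
  have hsupp : (Ideal.span {x}).piSupport = T := by
    ext k
    rw [Ideal.mem_piSupport_span_singleton]
    by_cases hk : k ∈ T <;> simp [x, hk, he]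
  have hbot : Ideal.span {x} ≠ ⊥ := fun h => hT.ne_empty (by simp [← hsupp, h, Ideal.piSupport])
  have htop : Ideal.span {x} ≠ ⊤ := by
    rw [Ne, Ideal.span_singleton_eq_top, Pi.isUnit_iff]
    intro hx
    have hT : ∀ k, k ∈ T := fun k => by_contra fun hk => he k <| by
      have := hx k
      simp only [x, Finset.piecewise_eq_of_notMem _ _ _ hk, Pi.zero_apply, isUnit_zero_iff] at this
      exact eq_zero_of_zero_eq_one this _
    exact he' (Pi.isUnit_iff.mpr fun k => by simpa [x, hT k] using hx k)
  exact ⟨⟨_, hbot, htop⟩, hsupp⟩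

namespace intersectionGraph

variable [∀ k, PreValuationRing (A k)] {I J : NontrivialIdeal (∀ k, A k)}

theorem adj_iff :
    (intersectionGraph (∀ k, A k)).Adj I J ↔ I ≠ J ∧ ¬Disjoint I.1.piSupport J.1.piSupport := by
  rw [← Ideal.inf_ne_bot_iff_not_disjoint_piSupport]
  rfl

theorem edist_le_one_iff :
    (intersectionGraph (∀ k, A k)).edist I J ≤ 1 ↔ ¬Disjoint I.1.piSupport J.1.piSupport := by
  rw [SimpleGraph.edist_le_one_iff_adj_or_eq, adj_iff]
  rcases eq_or_ne I J with rfl | hIJ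
  · simpa [disjoint_self_iff_empty] using (Ideal.piSupport_nonempty I.2.1).ne_empty
  · simp [hIJ]

theorem two_le_edist (h : Disjoint I.1.piSupport J.1.piSupport) :
    2 ≤ (intersectionGraph (∀ k, A k)).edist I J :=
  Order.add_one_le_of_lt (not_le.mp (edist_le_one_iff.not.mpr (not_not.mpr h)))

theorem edist_le_two (he : ∀ k, e k ≠ 0) (he' : ¬IsUnit e)
    (I J : NontrivialIdeal (∀ k, A k)) : (intersectionGraph (∀ k, A k)).edist I J ≤ 2 := by
  classical
  obtain ⟨k, hk⟩ := Ideal.piSupport_nonempty I.2.1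
  obtain ⟨l, hl⟩ := Ideal.piSupport_nonempty J.2.1
  obtain ⟨W, hW⟩ := NontrivialIdeal.exists_piSupport_eq he he' (insert_nonempty k {l})
  have hIW : (intersectionGraph (∀ k, A k)).edist I W ≤ 1 := edist_le_one_iff.mpr <|
    not_disjoint_iff.mpr ⟨k, hk, hW ▸ mem_insert_self k {l}⟩
  have hWJ : (intersectionGraph (∀ k, A k)).edist W J ≤ 1 := edist_le_one_iff.mpr <|
    not_disjoint_iff.mpr ⟨l, hW ▸ mem_insert_of_mem (mem_singleton_self l), hl⟩
  calc _ ≤ (intersectionGraph (∀ k, A k)).edist I W + (intersectionGraph (∀ k, A k)).edist W J :=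
        SimpleGraph.edist_triangle
    _ ≤ 1 + 1 := add_le_add hIW hWJ
    _ = 2 := one_add_one_eq_two

theorem mutuallyMaximallyDistant_of_piSupport_eq (hIJ : I ≠ J)
    (h : I.1.piSupport = J.1.piSupport) :
    MutuallyMaximallyDistant (intersectionGraph (∀ k, A k)) I J := by
  have hd : (intersectionGraph (∀ k, A k)).edist I J = 1 := SimpleGraph.edist_eq_one_iff_adj.mpr <|
    adj_iff.mpr ⟨hIJ, by simpa [h] using (Ideal.piSupport_nonempty J.2.1).ne_empty⟩
  refine ⟨hIJ, fun w hw => ?_, fun w hw => ?_⟩ <;> rw [hd, edist_le_one_iff] <;>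
    exact h ▸ (adj_iff.mp hw).2

theorem not_mutuallyMaximallyDistant_of_not_subset (he : ∀ k, e k ≠ 0) (he' : ¬IsUnit e)
    (hIJ : ¬Disjoint I.1.piSupport J.1.piSupport) (hsub : ¬I.1.piSupport ⊆ J.1.piSupport) :
    ¬MutuallyMaximallyDistant (intersectionGraph (∀ k, A k)) I J := by
  intro h
  obtain ⟨k, hkI, hkJ⟩ := not_subset.mp hsub
  obtain ⟨W, hW⟩ := NontrivialIdeal.exists_piSupport_eq he he' (singleton_nonempty k)
  have hJW : Disjoint J.1.piSupport W.1.piSupport := hW ▸ disjoint_singleton_right.mpr hkJ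
  have hIW : (intersectionGraph (∀ k, A k)).Adj I W := by
    refine adj_iff.mpr ⟨?_, hW ▸ not_disjoint_iff.mpr ⟨k, hkI, mem_singleton_self k⟩⟩
    rintro rfl
    exact hIJ hJW.symm
  have := (two_le_edist hJW).trans ((h.2.1 W hIW).trans (edist_le_one_iff.mpr hIJ))
  norm_num at this

theorem mutuallyMaximallyDistant_iff (he : ∀ k, e k ≠ 0) (he' : ¬IsUnit e) (hIJ : I ≠ J) :
    MutuallyMaximallyDistant (intersectionGraph (∀ k, A k)) I J ↔
      I.1.piSupport = J.1.piSupport ∨ Disjoint I.1.piSupport J.1.piSupport := by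
  refine ⟨fun h => ?_, ?_⟩
  · by_contra! hne
    by_cases hsub : I.1.piSupport ⊆ J.1.piSupport
    · exact not_mutuallyMaximallyDistant_of_not_subset he he' (fun hd => hne.2 hd.symm)
        (fun h' => hne.1 (subset_antisymm hsub h')) h.symm
    · exact not_mutuallyMaximallyDistant_of_not_subset he he' hne.2 hsub h
  · rintro (h | h)
    · exact mutuallyMaximallyDistant_of_piSupport_eq hIJ h
    · exact .of_forall_edist_le hIJ fun x y =>
        (edist_le_two he he' x y).trans (two_le_edist h)

theorem ncard_le_of_forall_not_mutuallyMaximallyDistant (he : ∀ k, e k ≠ 0) (he' : ¬IsUnit e)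
    {S : Set (NontrivialIdeal (∀ k, A k))} (hS : S.Finite)
    (hmmd : ∀ I ∈ S, ∀ J ∈ S, I ≠ J →
      ¬MutuallyMaximallyDistant (intersectionGraph (∀ k, A k)) I J) :
    S.ncard ≤ 2 ^ (Fintype.card ι - 1) := by
  classical
  have hinj : Set.InjOn (fun I => I.1.piSupport) S := fun I hI J hJ h => by_contra fun hIJ =>
    hmmd I hI J hJ hIJ ((mutuallyMaximallyDistant_iff he he' hIJ).mpr (.inl h))
  set F : Finset (Finset ι) := hS.toFinset.image fun I => I.1.piSupport
  have hF : (F : Set (Finset ι)).Intersecting := by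
    simp only [F, coe_image, Set.Finite.coe_toFinset]
    rintro _ ⟨I, hI, rfl⟩ _ ⟨J, hJ, rfl⟩ hdisj
    rcases eq_or_ne I J with rfl | hIJ
    · exact (Ideal.piSupport_nonempty I.2.1).ne_empty ((disjoint_self_iff_empty _).mp hdisj)
    · exact hmmd I hI J hJ hIJ ((mutuallyMaximallyDistant_iff he he' hIJ).mpr (.inr hdisj))
  have hcard : 2 * S.ncard ≤ 2 ^ Fintype.card ι := by
    have := hF.card_le
    rwa [Fintype.card_finset, card_image_of_injOn (by simpa using hinj), ← Set.ncard_coe_finset,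
      Set.Finite.coe_toFinset] at this
  generalize Fintype.card ι = n at hcard
  cases n with
  | zero => simp at hcard; lia
  | succ n => rw [pow_succ] at hcard; simp only [add_tsub_cancel_right]; lia

theorem exists_forall_not_mutuallyMaximallyDistant_ncard_eq (he : ∀ k, e k ≠ 0)
    (he' : ¬IsUnit e) :
    ∃ S : Set (NontrivialIdeal (∀ k, A k)), S.Finite ∧
      (∀ I ∈ S, ∀ J ∈ S, I ≠ J → ¬MutuallyMaximallyDistant (intersectionGraph (∀ k, A k)) I J) ∧
      S.ncard = 2 ^ (Fintype.card ι - 1) := by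
  classical
  obtain ⟨k₀⟩ : Nonempty ι := by
    by_contra h
    exact he' (Pi.isUnit_iff.mpr fun k => (not_nonempty_iff.mp h).elim k)
  choose V hV using fun T : Finset ι =>
    NontrivialIdeal.exists_piSupport_eq he he' (insert_nonempty k₀ T)
  set P := (univ.erase k₀).powerset
  have hins : Set.InjOn (insert k₀) (P : Set (Finset ι)) := fun T hT T' hT' h => by
    simp only [P, coe_powerset, Set.mem_preimage, Set.mem_powerset_iff, coe_subset,
      subset_erase, subset_univ, true_and] at hT hT'
    rw [← erase_insert hT, ← erase_insert hT', h]
  have hinj : Set.InjOn V P := fun T hT T' hT' h => hins hT hT' (by rw [← hV, ← hV, h])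
  refine ⟨V '' P, P.finite_toSet.image V, ?_, ?_⟩
  · rintro _ ⟨T, hT, rfl⟩ _ ⟨T', hT', rfl⟩ hne h
    rcases (mutuallyMaximallyDistant_iff he he' hne).mp h with h | h
    · exact hne (congrArg V (hins hT hT' (by rw [← hV, ← hV, h])))
    · rw [hV, hV] at h
      exact disjoint_left.mp h (mem_insert_self k₀ T) (mem_insert_self k₀ T')
  · rw [hinj.ncard_image, Set.ncard_coe_finset, card_powerset, card_erase_of_mem (mem_univ _),
      card_univ]

theorem isGreatest_ncard_forall_not_mutuallyMaximallyDistant (he : ∀ k, e k ≠ 0)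
    (he' : ¬IsUnit e) :
    IsGreatest {n : ℕ | ∃ S : Set (NontrivialIdeal (∀ k, A k)), S.Finite ∧
        (∀ I ∈ S, ∀ J ∈ S, I ≠ J →
          ¬MutuallyMaximallyDistant (intersectionGraph (∀ k, A k)) I J) ∧
        S.ncard = n} (2 ^ (Fintype.card ι - 1)) :=
  ⟨exists_forall_not_mutuallyMaximallyDistant_ncard_eq he he', by
    rintro _ ⟨S, hS, hmmd, rfl⟩
    exact ncard_le_of_forall_not_mutuallyMaximallyDistant he he' hS hmmd⟩

end intersectionGraph

end ProductRing

theorem statement17_general (m n : ℕ) (hm : 1 ≤ m)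
    (A : Fin m ⊕ Fin n → Type*) [∀ k, CommRing (A k)]
    (hart : ∀ i : Fin m, IsArtinianRing (A (Sum.inl i)))
    (hloc : ∀ i : Fin m, IsLocalRing (A (Sum.inl i)))
    (hpir : ∀ i : Fin m, IsPrincipalIdealRing (A (Sum.inl i)))
    (hnf : ∀ i : Fin m, ¬ IsField (A (Sum.inl i)))
    (hfield : ∀ j : Fin n, IsField (A (Sum.inr j))) :
    IsGreatest {k : ℕ | ∃ S : Set (NontrivialIdeal (∀ k, A k)), S.Finite ∧
        (∀ I ∈ S, ∀ J ∈ S, I ≠ J →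
          ¬ MutuallyMaximallyDistant (intersectionGraph (∀ k, A k)) I J) ∧
        S.ncard = k} (2 ^ (m + n - 1)) := by
  have : ∀ k, PreValuationRing (A k)
    | .inl i => by have := hart i; have := hloc i; have := hpir i; infer_instance
    | .inr j => by let := (hfield j).toField; infer_instance
  choose a ha0 ha using fun i => have := hloc i; exists_ne_zero_not_isUnit_of_not_isField (hnf i)
  let e : ∀ k, A k
    | .inl i => a i
    | .inr _ => 1
  have he : ∀ k, e k ≠ 0
    | .inl i => ha0 i
    | .inr j => by let := (hfield j).toField; exact one_ne_zero
  have he' : ¬IsUnit e := fun h => ha ⟨0, hm⟩ (h.apply (Sum.inl ⟨0, hm⟩))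
  simpa using intersectionGraph.isGreatest_ncard_forall_not_mutuallyMaximallyDistant he he'

theorem statement17 (m n : ℕ) (hm : 1 ≤ m) (hn : 1 ≤ n)
    (A : Fin m ⊕ Fin n → Type*) [∀ k, CommRing (A k)]
    (hart : ∀ i : Fin m, IsArtinianRing (A (Sum.inl i)))
    (hloc : ∀ i : Fin m, IsLocalRing (A (Sum.inl i)))
    (hpir : ∀ i : Fin m, IsPrincipalIdealRing (A (Sum.inl i)))
    (hnf : ∀ i : Fin m, ¬ IsField (A (Sum.inl i)))
    (hfield : ∀ j : Fin n, IsField (A (Sum.inr j))) :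
    IsGreatest {k : ℕ | ∃ S : Set (NontrivialIdeal (∀ k, A k)), S.Finite ∧
        (∀ I ∈ S, ∀ J ∈ S, I ≠ J →
          ¬ MutuallyMaximallyDistant (intersectionGraph (∀ k, A k)) I J) ∧
        S.ncard = k} (2 ^ (m + n - 1)) :=
  statement17_general m n hm A hart hloc hpir hnf hfield
end
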